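/- Fix an integer m ≥ 1 and a continuous function f : [0,1] → ℝ, and let e_m^{(n)} = (I − B_n)^m f denote the bootstrap bias after m−1 rounds of correction at sample size n. Then lim_{n→∞} n^m · sup_{p∈[0,1]} |e_m^{(n)}(p)| = 0 if and only if f is an affine function, i.e. there exist a, b ∈ ℝ with f(p) = a p + b for all p ∈ [0,1]. -/

import Mathlib

/-- Bernstein operator: `B_m[g](p) = Σ_{k=0}^m C(m,k) p^k (1-p)^{m-k} g(k/m)`. -/
noncomputable def bernstein' (m : ℕ) (g : ℝ → ℝ) (p : ℝ) : ℝ :=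
  ∑ k ∈ Finset.range (m + 1), (m.choose k : ℝ) * p ^ k * (1 - p) ^ (m - k) * g ((k : ℝ) / m)

/-- Iterated bootstrap bias: `bootIter n f m = (I − B_n)^m f`. -/
noncomputable def bootIter (n : ℕ) (f : ℝ → ℝ) : ℕ → ℝ → ℝ
  | 0 => f
  | m + 1 => fun p => bootIter n f m p - bernstein' n (bootIter n f m) p

/-!
If `f` is affine, `B_n` reproduces it, so every bias `(I - B_n)^m f` vanishes on `[0, 1]`.
Conversely, subtracting the chord `L` of `f` does not change `(I - B_n)^m f` for `m ≥ 1`, and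
every `(I - B_n)^j (f - L)` vanishes at `0` and `1`. For such an `h`, a discrete maximum principle
with the barrier `√(y (1 - y))`, which `B_n` lowers by at least `1 / (8n)` at the interior nodes
`k / n`, gives `‖h‖ ≤ (1 + 4n) ‖(I - B_n) h‖`. Iterating,
`‖f - L‖ ≤ 5^m n^m ‖(I - B_n)^m f‖ → 0`.
-/

open Finset

theorem Nat.cast_descFactorial_succ {R : Type*} [Ring R] (k j : ℕ) :
    (k.descFactorial (j + 1) : R) = k.descFactorial j * (k - j) := by
  rw [← descPochhammer_eval_eq_descFactorial, ← descPochhammer_eval_eq_descFactorial,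
    descPochhammer_succ_eval]

theorem sum_choose_mul_descFactorial_mul_pow {R : Type*} [CommSemiring R] (p q : R) (j n : ℕ) :
    ∑ k ∈ range (n + 1), ((n.choose k * k.descFactorial j : ℕ) : R) * p ^ k * q ^ (n - k) =
      n.descFactorial j * p ^ j * (p + q) ^ (n - j) := by
  induction j generalizing n with
  | zero =>
    simp only [Nat.descFactorial_zero, mul_one, Nat.cast_one, one_mul, pow_zero, Nat.sub_zero,
      add_pow]
    exact sum_congr rfl fun k _ => by ring
  | succ j ih =>
    cases n with
    | zero => simp
    | succ n =>
      have hterm (k : ℕ) : (((n + 1).choose (k + 1) * (k + 1).descFactorial (j + 1) : ℕ) : R) *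
          p ^ (k + 1) * q ^ (n + 1 - (k + 1)) =
          (n + 1) * p * (((n.choose k * k.descFactorial j : ℕ) : R) * p ^ k * q ^ (n - k)) := by
        rw [Nat.succ_descFactorial_succ, ← mul_assoc, ← Nat.add_one_mul_choose_eq,
          Nat.add_sub_add_right]
        push_cast
        ring
      rw [sum_range_succ', sum_congr rfl fun k _ => hterm k, ← mul_sum, ih,
        Nat.succ_descFactorial_succ, Nat.add_sub_add_right]
      simp
      ring

theorem bernstein'_central_cubic {n : ℕ} (hn : n ≠ 0) (p a b c d : ℝ) :
    bernstein' n (fun y => a + b * (y - p) + c * (y - p) ^ 2 + d * (y - p) ^ 3) p =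
      a + c * (p * (1 - p) / n) + d * (p * (1 - p) * (1 - 2 * p) / n ^ 2) := by
  have hmom (j : ℕ) := sum_choose_mul_descFactorial_mul_pow p (1 - p) j n
  simp only [add_sub_cancel, one_pow, mul_one, Nat.cast_mul] at hmom
  have hn' : (n : ℝ) ≠ 0 := Nat.cast_ne_zero.mpr hn
  -- coefficients of the cubic in the basis `k.descFactorial j`, `j ≤ 3`, with `y = k / n`
  set A3 := d / n ^ 3
  set A2 := c / n ^ 2 + 3 * d / n ^ 3 - 3 * p * d / n ^ 2
  set A1 := b / n + c / n ^ 2 - 2 * p * c / n + d / n ^ 3 - 3 * p * d / n ^ 2 + 3 * p ^ 2 * d / n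
  set A0 := a - b * p + c * p ^ 2 - d * p ^ 3
  have hterm (k : ℕ) : (n.choose k : ℝ) * p ^ k * (1 - p) ^ (n - k) *
      (a + b * (k / n - p) + c * (k / n - p) ^ 2 + d * (k / n - p) ^ 3) =
      A0 * ((n.choose k * k.descFactorial 0 : ℝ) * p ^ k * (1 - p) ^ (n - k)) +
      A1 * ((n.choose k * k.descFactorial 1 : ℝ) * p ^ k * (1 - p) ^ (n - k)) +
      A2 * ((n.choose k * k.descFactorial 2 : ℝ) * p ^ k * (1 - p) ^ (n - k)) +
      A3 * ((n.choose k * k.descFactorial 3 : ℝ) * p ^ k * (1 - p) ^ (n - k)) := by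
    simp only [Nat.cast_descFactorial_succ, Nat.descFactorial_zero, Nat.cast_one, A0, A1, A2, A3]
    field_simp
    ring
  unfold bernstein'
  simp only [hterm, sum_add_distrib, ← mul_sum, hmom]
  simp only [Nat.cast_descFactorial_succ, Nat.descFactorial_zero, Nat.cast_one, A0, A1, A2, A3]
  field_simp
  ring

section Bernstein

variable {n : ℕ} {g h : ℝ → ℝ} {p : ℝ}

theorem natCast_div_mem_Icc {k : ℕ} (hk : k ≤ n) : (k : ℝ) / n ∈ Set.Icc 0 1 :=
  ⟨by positivity, div_le_one_of_le₀ (by exact_mod_cast hk) n.cast_nonneg⟩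

theorem bernstein'_add :
    bernstein' n (fun x => g x + h x) p = bernstein' n g p + bernstein' n h p := by
  simp only [bernstein', ← sum_add_distrib, mul_add]

theorem bernstein'_sub :
    bernstein' n (fun x => g x - h x) p = bernstein' n g p - bernstein' n h p := by
  simp only [bernstein', ← sum_sub_distrib, mul_sub]

theorem bernstein'_neg : bernstein' n (fun x => -g x) p = -bernstein' n g p := by
  simp only [bernstein', ← sum_neg_distrib, mul_neg]

theorem bernstein'_const_mul (c : ℝ) :
    bernstein' n (fun x => c * g x) p = c * bernstein' n g p := by
  simp only [bernstein', mul_sum]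
  exact sum_congr rfl fun _ _ => by ring

theorem bernstein'_const (c : ℝ) : bernstein' n (fun _ => c) p = c := by
  have := sum_choose_mul_descFactorial_mul_pow p (1 - p) 0 n
  simp only [Nat.descFactorial_zero, mul_one, add_sub_cancel, one_pow, pow_zero] at this
  simp [bernstein', ← sum_mul, this]

theorem bernstein'_affine (hn : n ≠ 0) (a b : ℝ) :
    bernstein' n (fun x => a * x + b) p = a * p + b := by
  have := bernstein'_central_cubic hn p (a * p + b) a 0 0
  simp only [zero_mul, add_zero] at this
  rw [← this]
  congr 1
  ext x
  ring

theorem bernstein'_apply_zero : bernstein' n g 0 = g 0 := by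
  simp [bernstein', sum_range_succ']

theorem bernstein'_apply_one (hn : n ≠ 0) : bernstein' n g 1 = g 1 := by
  rw [bernstein', sum_range_succ, sum_eq_zero fun k hk => ?_]
  · simp [hn]
  · simp [Nat.sub_ne_zero_of_lt (mem_range.mp hk)]

theorem continuous_bernstein' : Continuous (bernstein' n g) := by
  unfold bernstein'
  fun_prop

theorem bernstein'_congr (hgh : ∀ k ≤ n, g (k / n) = h (k / n)) :
    bernstein' n g p = bernstein' n h p :=
  sum_congr rfl fun k hk => by rw [hgh k (Nat.lt_succ_iff.mp (mem_range.mp hk))]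

theorem bernstein'_mono (hgh : ∀ k ≤ n, g (k / n) ≤ h (k / n)) (hp : p ∈ Set.Icc 0 1) :
    bernstein' n g p ≤ bernstein' n h p := by
  have : 0 ≤ 1 - p := sub_nonneg.mpr hp.2
  have := hp.1
  exact sum_le_sum fun k hk =>
    mul_le_mul_of_nonneg_left (hgh k (Nat.lt_succ_iff.mp (mem_range.mp hk))) (by positivity)

theorem abs_bernstein'_le {M : ℝ} (hg : ∀ k ≤ n, |g (k / n)| ≤ M) (hp : p ∈ Set.Icc 0 1) :
    |bernstein' n g p| ≤ M := by
  rw [abs_le]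
  constructor
  · simpa only [bernstein'_const] using
      bernstein'_mono (g := fun _ => -M) (fun k hk => (abs_le.mp (hg k hk)).1) hp
  · simpa only [bernstein'_const] using
      bernstein'_mono (h := fun _ => M) (fun k hk => (abs_le.mp (hg k hk)).2) hp

theorem pow_mul_apply_zero_le_bernstein' (hg : ∀ k ≤ n, 0 ≤ g (k / n))
    (hp : p ∈ Set.Icc 0 1) :
    (1 - p) ^ n * g 0 ≤ bernstein' n g p := by
  have : 0 ≤ 1 - p := sub_nonneg.mpr hp.2
  have := hp.1
  have h0 := single_le_sum (f := fun k => (n.choose k : ℝ) * p ^ k * (1 - p) ^ (n - k) *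
    g ((k : ℝ) / n)) (fun k hk => mul_nonneg (by positivity)
      (hg k (Nat.lt_succ_iff.mp (mem_range.mp hk)))) (mem_range.mpr n.succ_pos)
  simpa [bernstein'] using h0

end Bernstein

theorem two_mul_sqrt_mul_sqrt_le {p y : ℝ} (hp : p ∈ Set.Icc 0 1) (hy : y ∈ Set.Icc 0 1)
    (l : ℝ) :
    2 * √(p * (1 - p)) * √(y * (1 - y)) ≤
      2 * p * (1 - p) + (1 - 2 * p) * (y - p) - l * (y - p) ^ 2 +
        l ^ 2 / 2 * (y - p) ^ 2 * (2 * p * (1 - p) + (1 - 2 * p) * (y - p)) := by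
  obtain ⟨hp0, hp1⟩ := hp
  obtain ⟨hy0, hy1⟩ := hy
  set a := √(y * (1 - p))
  set b := √((1 - y) * p)
  have ha : a ^ 2 = y * (1 - p) := Real.sq_sqrt (by nlinarith)
  have hb : b ^ 2 = (1 - y) * p := Real.sq_sqrt (by nlinarith)
  have hab : √(p * (1 - p)) * √(y * (1 - y)) = a * b := by
    rw [← Real.sqrt_mul (by nlinarith), ← Real.sqrt_mul (by nlinarith)]
    congr 1
    ring
  have hdiff : y - p = a ^ 2 - b ^ 2 := by rw [ha, hb]; ring
  have hW : 2 * p * (1 - p) + (1 - 2 * p) * (y - p) = a ^ 2 + b ^ 2 := by rw [ha, hb]; ring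
  rw [mul_assoc, hab, hW, hdiff]
  set z := (a - b) ^ 2
  set s := (a + b) ^ 2
  have key : a ^ 2 + b ^ 2 - l * (a ^ 2 - b ^ 2) ^ 2 +
      l ^ 2 / 2 * (a ^ 2 - b ^ 2) ^ 2 * (a ^ 2 + b ^ 2) - 2 * (a * b) =
      z * (1 - l * s / 2) ^ 2 + (l * z) ^ 2 * s / 4 := by
    simp only [z, s]
    ring
  linarith [mul_nonneg (sq_nonneg (a - b)) (sq_nonneg (1 - l * s / 2)),
    mul_nonneg (sq_nonneg (l * z)) (sq_nonneg (a + b))]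

theorem bernstein'_sqrt_le {n : ℕ} {p : ℝ} (hp : p ∈ Set.Ioo 0 1)
    (hnp : 1 ≤ 2 * n * (p * (1 - p))) :
    bernstein' n (fun y => √(y * (1 - y))) p ≤ √(p * (1 - p)) - 1 / (8 * n) := by
  obtain ⟨hp0, hp1⟩ := hp
  have ht : 0 < p * (1 - p) := mul_pos hp0 (sub_pos.mpr hp1)
  have hn : n ≠ 0 := by rintro rfl; simp at hnp; linarith
  have hn' : (0 : ℝ) < n := by positivity
  set r := √(p * (1 - p))
  have hr : 0 < r := Real.sqrt_pos.mpr ht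
  have hr2 : r ^ 2 = p * (1 - p) := Real.sq_sqrt ht.le
  -- balances the `1 / n` gain of the quadratic term against the cost of the cubic one
  set l := 1 / (4 * (p * (1 - p)))
  have hmaj : 2 * r * bernstein' n (fun y => √(y * (1 - y))) p ≤
      bernstein' n (fun y => 2 * p * (1 - p) + (1 - 2 * p) * (y - p) +
        (l ^ 2 * (p * (1 - p)) - l) * (y - p) ^ 2 + l ^ 2 / 2 * (1 - 2 * p) * (y - p) ^ 3) p := by
    rw [← bernstein'_const_mul]
    refine bernstein'_mono (fun k hk => ?_) ⟨hp0.le, hp1.le⟩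
    refine (two_mul_sqrt_mul_sqrt_le ⟨hp0.le, hp1.le⟩ (natCast_div_mem_Icc hk) l).trans_eq ?_
    ring
  rw [bernstein'_central_cubic hn] at hmaj
  have hval : 2 * p * (1 - p) + (l ^ 2 * (p * (1 - p)) - l) * (p * (1 - p) / n) +
      l ^ 2 / 2 * (1 - 2 * p) * (p * (1 - p) * (1 - 2 * p) / n ^ 2) ≤
        2 * r ^ 2 - 1 / (8 * n) := by
    have hsq : (1 - 2 * p) ^ 2 ≤ 2 * n * (p * (1 - p)) := by nlinarith
    have hdiff : 2 * p * (1 - p) + (l ^ 2 * (p * (1 - p)) - l) * (p * (1 - p) / n) +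
        l ^ 2 / 2 * (1 - 2 * p) * (p * (1 - p) * (1 - 2 * p) / n ^ 2) - (2 * r ^ 2 - 1 / (8 * n)) =
        ((1 - 2 * p) ^ 2 - 2 * n * (p * (1 - p))) / (32 * (p * (1 - p)) * n ^ 2) := by
      rw [hr2]
      simp only [l]
      field_simp
      ring
    have : ((1 - 2 * p) ^ 2 - 2 * n * (p * (1 - p))) / (32 * (p * (1 - p)) * n ^ 2) ≤ 0 :=
      div_nonpos_of_nonpos_of_nonneg (by linarith) (by positivity)
    linarith
  have hr_le : r ≤ 1 / 2 :=
    Real.sqrt_le_iff.mpr ⟨by norm_num, by nlinarith [sq_nonneg (2 * p - 1)]⟩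
  have hrc := mul_le_mul_of_nonneg_right hr_le (by positivity : (0 : ℝ) ≤ 1 / (8 * n))
  refine le_of_mul_le_mul_left ?_ (by positivity : (0 : ℝ) < 2 * r)
  linarith

theorem one_le_two_mul_natCast_div_mul_one_sub {n k : ℕ} (hk0 : 0 < k) (hkn : k < n) :
    1 ≤ 2 * n * ((k : ℝ) / n * (1 - k / n)) := by
  have hn : (0 : ℝ) < n := by exact_mod_cast hk0.trans hkn
  have hk : (1 : ℝ) ≤ k := by exact_mod_cast hk0
  have hnk : (k : ℝ) + 1 ≤ n := by exact_mod_cast hkn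
  rw [show 2 * n * ((k : ℝ) / n * (1 - k / n)) = 2 * k * (n - k) / n by field_simp]
  rw [le_div_iff₀ hn]
  nlinarith

/-- At an interior node maximizing `h - 8nε √(y (1 - y))` over the nodes, `bernstein'_sqrt_le`
makes this function at most its `B_n`-average; the weight `(1 - y)^n > 0` of the node `0` then
bounds the maximum by `h 0`. -/
theorem le_mul_sqrt_of_sub_bernstein'_le {n : ℕ} {h : ℝ → ℝ} {ε : ℝ} (hε : 0 ≤ ε)
    (h0 : h 0 ≤ 0) (h1 : h 1 ≤ 0)
    (hsub : ∀ k ≤ n, h (k / n) - bernstein' n h (k / n) ≤ ε)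
    {k : ℕ} (hk : k ≤ n) :
    h (k / n) ≤ 8 * n * ε * √(k / n * (1 - k / n)) := by
  set c := 8 * n * ε
  set s : ℝ → ℝ := fun y => √(y * (1 - y))
  set ψ : ℝ → ℝ := fun y => h y - c * s y
  obtain ⟨i, hi, hmax⟩ :=
    exists_max_image (range (n + 1)) (fun k => ψ (k / n)) nonempty_range_add_one
  have hi : i ≤ n := Nat.lt_succ_iff.mp (mem_range.mp hi)
  have hmax' : ∀ k ≤ n, ψ (k / n) ≤ ψ (i / n) := fun k hk =>
    hmax k (mem_range.mpr (Nat.lt_succ_of_le hk))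
  suffices ψ (i / n) ≤ 0 by linarith [hmax' k hk]
  rcases Nat.eq_zero_or_pos i with rfl | hi0
  · simpa [ψ, s] using h0
  rcases hi.eq_or_lt with rfl | hin
  · simpa [ψ, s, hi0.ne'] using h1
  set y : ℝ := i / n
  have hn : (0 : ℝ) < n := by exact_mod_cast hi0.trans hin
  have hy : y ∈ Set.Ioo 0 1 :=
    ⟨by positivity, (div_lt_one hn).mpr (by exact_mod_cast hin)⟩
  have hlow := pow_mul_apply_zero_le_bernstein' (n := n) (g := fun x => ψ y - ψ x)
    (fun k hk => sub_nonneg.mpr (hmax' k hk)) (Set.Ioo_subset_Icc_self hy)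
  simp only [bernstein'_sub, bernstein'_const, bernstein'_const_mul, ψ] at hlow
  have hs := bernstein'_sqrt_le hy (one_le_two_mul_natCast_div_mul_one_sub hi0 hin)
  have hsub_i := hsub i hi
  have hc : c * (1 / (8 * n)) = ε := by simp only [c]; field_simp
  have hc0 : 0 ≤ c := by positivity
  have hψ : ψ y - (bernstein' n h y - c * bernstein' n s y) ≤ 0 := by
    have := mul_le_mul_of_nonneg_left hs hc0
    simp only [ψ, s] at this ⊢
    linarith
  have hs0 : s 0 = 0 := by simp [s]
  rw [hs0, mul_zero, sub_zero] at hlow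
  have hpow : 0 < (1 - y) ^ n := pow_pos (sub_pos.mpr hy.2) n
  have := nonpos_of_mul_nonpos_right (hlow.trans hψ) hpow
  linarith

theorem abs_le_of_abs_sub_bernstein'_le {n : ℕ} {h : ℝ → ℝ} {ε : ℝ}
    (h0 : h 0 = 0) (h1 : h 1 = 0)
    (hsub : ∀ x ∈ Set.Icc (0 : ℝ) 1, |h x - bernstein' n h x| ≤ ε) {x : ℝ}
    (hx : x ∈ Set.Icc 0 1) : |h x| ≤ (1 + 4 * n) * ε := by
  have hε : 0 ≤ ε := (abs_nonneg _).trans (hsub 0 (by simp))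
  have hgrid : ∀ k ≤ n, |h (k / n)| ≤ 4 * n * ε := by
    intro k hk
    have hsqrt : √((k : ℝ) / n * (1 - k / n)) ≤ 1 / 2 :=
      Real.sqrt_le_iff.mpr ⟨by norm_num, by nlinarith [sq_nonneg ((k : ℝ) / n - 1 / 2)]⟩
    have hbound : 8 * n * ε * √((k : ℝ) / n * (1 - k / n)) ≤ 4 * n * ε := by
      linarith [mul_le_mul_of_nonneg_left hsqrt (by positivity : (0 : ℝ) ≤ 8 * n * ε)]
    have hpos := le_mul_sqrt_of_sub_bernstein'_le hε h0.le h1.le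
      (fun j hj => (le_abs_self _).trans (hsub _ (natCast_div_mem_Icc hj))) hk
    have hneg := le_mul_sqrt_of_sub_bernstein'_le (h := fun x => -h x) hε (by simp [h0])
      (by simp [h1]) (fun j hj => by
        rw [bernstein'_neg, neg_sub_neg]
        linarith [neg_abs_le (h (j / n) - bernstein' n h (j / n)), hsub _ (natCast_div_mem_Icc hj)])
      hk
    rw [abs_le]
    constructor <;> linarith
  calc |h x| ≤ |h x - bernstein' n h x| + |bernstein' n h x| := by
        linarith [abs_sub_abs_le_abs_sub (h x) (bernstein' n h x)]
    _ ≤ ε + 4 * n * ε := add_le_add (hsub x hx) (abs_bernstein'_le hgrid hx)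
    _ = (1 + 4 * n) * ε := by ring

noncomputable def supNorm (g : ℝ → ℝ) : ℝ := sSup ((fun p => |g p|) '' Set.Icc (0 : ℝ) 1)

section SupNorm

variable {g : ℝ → ℝ}

theorem abs_le_supNorm (hg : ContinuousOn g (Set.Icc 0 1)) {x : ℝ} (hx : x ∈ Set.Icc 0 1) :
    |g x| ≤ supNorm g :=
  le_csSup (isCompact_Icc.bddAbove_image hg.abs) ⟨x, hx, rfl⟩

theorem supNorm_le {c : ℝ} (hc : ∀ x ∈ Set.Icc (0 : ℝ) 1, |g x| ≤ c) : supNorm g ≤ c :=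
  csSup_le ⟨|g 0|, 0, by simp, rfl⟩ (by rintro _ ⟨x, hx, rfl⟩; exact hc x hx)

theorem supNorm_nonneg : 0 ≤ supNorm g :=
  Real.sSup_nonneg (by rintro _ ⟨x, _, rfl⟩; exact abs_nonneg _)

theorem supNorm_le_mul_supNorm_sub_bernstein' {n : ℕ} (hg : ContinuousOn g (Set.Icc 0 1))
    (g0 : g 0 = 0) (g1 : g 1 = 0) :
    supNorm g ≤ (1 + 4 * n) * supNorm (fun x => g x - bernstein' n g x) :=
  supNorm_le fun _ hx => abs_le_of_abs_sub_bernstein'_le g0 g1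
    (fun _ hy => abs_le_supNorm (hg.sub continuous_bernstein'.continuousOn) hy) hx

end SupNorm

section BootIter

variable {n : ℕ} {f : ℝ → ℝ}

theorem continuousOn_bootIter (hf : ContinuousOn f (Set.Icc 0 1)) (j : ℕ) :
    ContinuousOn (bootIter n f j) (Set.Icc 0 1) := by
  induction j with
  | zero => exact hf
  | succ j ih => exact ih.sub continuous_bernstein'.continuousOn

theorem bootIter_apply_zero_and_one (hn : n ≠ 0) (f0 : f 0 = 0) (f1 : f 1 = 0) :
    ∀ j, bootIter n f j 0 = 0 ∧ bootIter n f j 1 = 0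
  | 0 => ⟨f0, f1⟩
  | _ + 1 => by simp [bootIter, bernstein'_apply_zero, bernstein'_apply_one hn]

theorem bootIter_succ_add_affine (hn : n ≠ 0) (a b : ℝ) (j : ℕ) :
    bootIter n (fun x => f x + (a * x + b)) (j + 1) = bootIter n f (j + 1) := by
  induction j with
  | zero =>
    ext x
    simp only [bootIter, bernstein'_add, bernstein'_affine hn]
    ring
  | succ j ih => rw [bootIter, ih, ← bootIter]

theorem bootIter_congr {f' : ℝ → ℝ} (hff' : Set.EqOn f f' (Set.Icc 0 1)) (j : ℕ) :
    Set.EqOn (bootIter n f j) (bootIter n f' j) (Set.Icc 0 1) := by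
  induction j with
  | zero => exact hff'
  | succ j ih =>
    intro x hx
    simp only [bootIter, ih hx, bernstein'_congr fun k hk => ih (natCast_div_mem_Icc hk)]

theorem bootIter_zero_fun (j : ℕ) : bootIter n (fun _ => 0) j = fun _ => 0 := by
  induction j with
  | zero => rfl
  | succ j ih => simp [bootIter, ih, bernstein'_const]

theorem supNorm_le_pow_mul_supNorm_bootIter (hf : ContinuousOn f (Set.Icc 0 1))
    (hn : n ≠ 0) (f0 : f 0 = 0) (f1 : f 1 = 0) (j : ℕ) :
    supNorm f ≤ (1 + 4 * n) ^ j * supNorm (bootIter n f j) := by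
  induction j with
  | zero => simp [bootIter]
  | succ j ih =>
    obtain ⟨h0, h1⟩ := bootIter_apply_zero_and_one hn f0 f1 j
    calc supNorm f ≤ (1 + 4 * n) ^ j * supNorm (bootIter n f j) := ih
      _ ≤ (1 + 4 * n) ^ j * ((1 + 4 * n) * supNorm (bootIter n f (j + 1))) :=
        mul_le_mul_of_nonneg_left
          (supNorm_le_mul_supNorm_sub_bernstein' (continuousOn_bootIter hf j) h0 h1)
          (by positivity)
      _ = (1 + 4 * n) ^ (j + 1) * supNorm (bootIter n f (j + 1)) := by ring

theorem supNorm_sub_chord_le (hf : ContinuousOn f (Set.Icc 0 1)) (hn : n ≠ 0) (j : ℕ) :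
    supNorm (fun x => f x - ((f 1 - f 0) * x + f 0)) ≤
      5 ^ (j + 1) * ((n : ℝ) ^ (j + 1) * supNorm (bootIter n f (j + 1))) := by
  set g : ℝ → ℝ := fun x => f x - ((f 1 - f 0) * x + f 0)
  have hfg : (fun x => g x + ((f 1 - f 0) * x + f 0)) = f := by ext; simp [g]
  have hn' : (1 : ℝ) ≤ n := by exact_mod_cast Nat.one_le_iff_ne_zero.mpr hn
  calc supNorm g ≤ (1 + 4 * n) ^ (j + 1) * supNorm (bootIter n g (j + 1)) :=
        supNorm_le_pow_mul_supNorm_bootIter (hf.sub (by fun_prop)) hn (by simp) (by simp) _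
    _ ≤ (5 * n) ^ (j + 1) * supNorm (bootIter n f (j + 1)) := by
      rw [← hfg, bootIter_succ_add_affine hn]
      gcongr
      · exact supNorm_nonneg
      · linarith
    _ = _ := by ring

theorem supNorm_bootIter_succ_of_affine (hn : n ≠ 0) {a b : ℝ}
    (hf : ∀ p ∈ Set.Icc (0 : ℝ) 1, f p = a * p + b) (j : ℕ) :
    supNorm (bootIter n f (j + 1)) = 0 := by
  have hzero : ∀ x ∈ Set.Icc (0 : ℝ) 1, bootIter n f (j + 1) x = 0 := by
    intro x hx
    rw [bootIter_congr (f' := fun x => (fun _ => 0) x + (a * x + b))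
      (fun y hy => by simpa using hf y hy) _ hx, bootIter_succ_add_affine hn, bootIter_zero_fun]
  exact le_antisymm (supNorm_le fun x hx => by simp [hzero x hx]) supNorm_nonneg

end BootIter

/-- `n^m · ‖(I−B_n)^m f‖ → 0` as `n → ∞` iff `f` is affine on `[0,1]`. -/
theorem bootstrap_bias_little_o_iff_affine (m : ℕ) (hm : 1 ≤ m) (f : ℝ → ℝ)
    (hf : ContinuousOn f (Set.Icc 0 1)) :
    Filter.Tendsto
      (fun n : ℕ => (n : ℝ) ^ m *
        sSup ((fun p => |bootIter n f m p|) '' Set.Icc (0:ℝ) 1))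
      Filter.atTop (nhds 0) ↔
    ∃ a b : ℝ, ∀ p ∈ Set.Icc (0:ℝ) 1, f p = a * p + b := by
  obtain ⟨m, rfl⟩ := Nat.exists_eq_add_of_le' hm
  change Filter.Tendsto (fun n : ℕ => (n : ℝ) ^ (m + 1) * supNorm (bootIter n f (m + 1)))
    Filter.atTop (nhds 0) ↔ _
  constructor
  · intro hlim
    have hchord : supNorm (fun x => f x - ((f 1 - f 0) * x + f 0)) ≤ 0 :=
      ge_of_tendsto (by simpa using hlim.const_mul (5 ^ (m + 1))) <|
        Filter.eventually_atTop.mpr ⟨1, fun n hn => supNorm_sub_chord_le hf (by omega) m⟩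
    refine ⟨f 1 - f 0, f 0, fun p hp => ?_⟩
    have := (abs_le_supNorm (hf.sub (by fun_prop)) hp).trans hchord
    rwa [abs_nonpos_iff, Pi.sub_apply, sub_eq_zero] at this
  · rintro ⟨a, b, hab⟩
    refine tendsto_const_nhds.congr' (Filter.eventually_atTop.mpr ⟨1, fun n hn => ?_⟩)
    simp only [supNorm_bootIter_succ_of_affine (n := n) (by omega) hab, mul_zero]
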